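/- arXiv:0804.1752 — 2 statements merged into one kernel-verified Lean document; each statement's English description precedes it below -/
import Mathlib

section
/- Let φ : ℝ⁴∖{0} → ℝ⁴, φ(x) = x/|x|², and λ²(x) = 1/|x|⁴. Then for all α, β ∈ {1,2,3,4} and all x ≠ 0: δ^{αβ}·Δ(λ²)(x) + div(Δφ^β·∇φ^α)(x) + div(Δφ^α·∇φ^β)(x) = Δφ^α(x)·Δφ^β(x). (That is, the inversion on ℝ⁴ satisfies the fourth defining condition for a biharmonic morphism between flat spaces.) -/
open scoped RealInnerProductSpace

noncomputable section

abbrev E (n : ℕ) := EuclideanSpace ℝ (Fin n)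

/-- Partial derivative in the `i`-th coordinate direction. -/
def pd {m : ℕ} (u : E m → ℝ) (i : Fin m) : E m → ℝ :=
  fun x => fderiv ℝ u x (EuclideanSpace.single i 1)

/-- Euclidean Laplacian `Δu = Σᵢ ∂²u/∂xᵢ²`. -/
def lap {m : ℕ} (u : E m → ℝ) : E m → ℝ :=
  fun x => ∑ i, pd (pd u i) i x

/-- Euclidean divergence of a vector field. -/
def div' {m : ℕ} (V : E m → E m) : E m → ℝ :=
  fun x => ∑ i, pd (fun y => V y i) i x

/-!
Write `q = |x|⁻²`, so that `∂ᵢ q = -2 xᵢ q²`. Every quantity in the identity is a monomial in the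
coordinates times a power of `q`, and in `ℝᵐ` one finds `Δ(q^k) = 2k(2k+2-m) q^(k+1)`,
`Δ(x_a q^k) = 2k(2k-m) x_a q^(k+1)` and, via `div(u ∇v) = ∇u·∇v + u Δv`,
`div(Δφ^b ∇φ^a) = (4-2m)(δ_ab q³ + (6-2m) x_a x_b q⁴)`. For `m = 4` the `δ_ab`-terms
`8q³ - 4q³ - 4q³` cancel and both sides equal `16 x_a x_b q⁴`.
-/

open Filter Topology

section PartialDerivatives

variable {m : ℕ} {u v : E m → ℝ} {x : E m}

lemma pd_congr (h : u =ᶠ[𝓝 x] v) (i : Fin m) : pd u i x = pd v i x := by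
  rw [pd, pd, h.fderiv_eq]

lemma pd_sub (hu : DifferentiableAt ℝ u x) (hv : DifferentiableAt ℝ v x) (i : Fin m) :
    pd (fun y => u y - v y) i x = pd u i x - pd v i x := by
  simp [pd, fderiv_fun_sub hu hv]

lemma pd_mul (hu : DifferentiableAt ℝ u x) (hv : DifferentiableAt ℝ v x) (i : Fin m) :
    pd (fun y => u y * v y) i x = pd u i x * v x + u x * pd v i x := by
  simp [pd, fderiv_fun_mul hu hv, add_comm, mul_comm]

lemma pd_const_mul (hu : DifferentiableAt ℝ u x) (c : ℝ) (i : Fin m) :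
    pd (fun y => c * u y) i x = c * pd u i x := by
  simp [pd, fderiv_const_mul hu c]

lemma pd_pow (hu : DifferentiableAt ℝ u x) (k : ℕ) (i : Fin m) :
    pd (fun y => u y ^ (k + 1)) i x = (k + 1) * u x ^ k * pd u i x := by
  simp [pd, fderiv_fun_pow (k + 1) hu, mul_assoc]

lemma pd_coord (j i : Fin m) : pd (fun y : E m => y j) i x = if j = i then 1 else 0 := by
  have h : HasFDerivAt (fun y : E m => y j) (EuclideanSpace.proj (𝕜 := ℝ) j) x :=
    (EuclideanSpace.proj (𝕜 := ℝ) j).hasFDerivAt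
  simp [pd, h.fderiv]

lemma differentiableAt_coord (j : Fin m) : DifferentiableAt ℝ (fun y : E m => y j) x :=
  (EuclideanSpace.proj (𝕜 := ℝ) j).differentiableAt

lemma gradient_apply_eq_pd (u : E m → ℝ) (x : E m) (i : Fin m) : gradient u x i = pd u i x := by
  rw [pd, gradient, ← InnerProductSpace.toDual_symm_apply, EuclideanSpace.inner_single_right]
  simp

lemma div'_congr {V W : E m → E m} (h : V =ᶠ[𝓝 x] W) : div' V x = div' W x :=
  Finset.sum_congr rfl fun i _ => pd_congr (h.mono fun y hy => by rw [hy]) i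

lemma div'_smul_gradient (hu : DifferentiableAt ℝ u x)
    (hv : ∀ i, DifferentiableAt ℝ (pd v i) x) :
    div' (fun y => u y • gradient v y) x = ∑ i, pd u i x * pd v i x + u x * lap v x := by
  simp only [div', lap, PiLp.smul_apply, smul_eq_mul, gradient_apply_eq_pd, Finset.mul_sum,
    ← Finset.sum_add_distrib]
  exact Finset.sum_congr rfl fun i _ => pd_mul hu (hv i) i

end PartialDerivatives

section InverseNormSquare

variable {m : ℕ} {x : E m}

def invNormSq (y : E m) : ℝ := (‖y‖ ^ 2)⁻¹

lemma sum_sq_mul_invNormSq (hx : x ≠ 0) : (∑ i, x i ^ 2) * invNormSq x = 1 := by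
  rw [invNormSq, ← EuclideanSpace.real_norm_sq_eq]
  exact mul_inv_cancel₀ (by positivity)

lemma hasFDerivAt_invNormSq (hx : x ≠ 0) :
    HasFDerivAt invNormSq ((-2 * invNormSq x ^ 2) • innerSL ℝ x) x := by
  refine ((hasDerivAt_inv (by positivity : ‖x‖ ^ 2 ≠ 0)).comp_hasFDerivAt x
    (hasStrictFDerivAt_norm_sq x).hasFDerivAt).congr_fderiv ?_
  ext v
  simp [invNormSq]
  ring

lemma differentiableAt_invNormSq (hx : x ≠ 0) : DifferentiableAt ℝ invNormSq x :=
  (hasFDerivAt_invNormSq hx).differentiableAt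

lemma differentiableAt_coord_mul_invNormSq_pow (hx : x ≠ 0) (a : Fin m) (k : ℕ) :
    DifferentiableAt ℝ (fun y => y a * invNormSq y ^ k) x :=
  (differentiableAt_coord a).mul ((differentiableAt_invNormSq hx).fun_pow k)

lemma pd_invNormSq (hx : x ≠ 0) (i : Fin m) : pd invNormSq i x = -2 * x i * invNormSq x ^ 2 := by
  simp [pd, (hasFDerivAt_invNormSq hx).fderiv, EuclideanSpace.inner_single_right]
  ring

-- The right-hand sides below are bracketed as `c * (monomial * power)` so that they can be
-- differentiated again with `pd_const_mul`.
lemma pd_invNormSq_pow (hx : x ≠ 0) (k : ℕ) (i : Fin m) :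
    pd (fun y => invNormSq y ^ k) i x = -2 * k * (x i * invNormSq x ^ (k + 1)) := by
  cases k with
  | zero => simp [pd]
  | succ k =>
    rw [pd_pow (differentiableAt_invNormSq hx), pd_invNormSq hx]
    push_cast
    ring

lemma pd_coord_mul_invNormSq_pow (hx : x ≠ 0) (a : Fin m) (k : ℕ) (i : Fin m) :
    pd (fun y => y a * invNormSq y ^ k) i x
      = (if a = i then 1 else 0) * invNormSq x ^ k
        - 2 * k * (x a * (x i * invNormSq x ^ (k + 1))) := by
  rw [pd_mul (differentiableAt_coord a) ((differentiableAt_invNormSq hx).fun_pow k), pd_coord,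
    pd_invNormSq_pow hx]
  ring

lemma lap_invNormSq_pow (hx : x ≠ 0) (k : ℕ) :
    lap (fun y => invNormSq y ^ k) x = 2 * k * (2 * k + 2 - m) * invNormSq x ^ (k + 1) := by
  have hpd : ∀ i, pd (pd (fun y => invNormSq y ^ k) i) i x
      = -2 * k * invNormSq x ^ (k + 1) + 4 * k * (k + 1) * invNormSq x ^ (k + 2) * x i ^ 2 := by
    intro i
    rw [pd_congr ((eventually_ne_nhds hx).mono fun y hy => pd_invNormSq_pow hy k i),
      pd_const_mul (differentiableAt_coord_mul_invNormSq_pow hx i _),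
      pd_coord_mul_invNormSq_pow hx]
    simp only [if_true]
    push_cast
    ring
  simp only [lap, hpd, Finset.sum_add_distrib, Finset.sum_const, Finset.card_univ,
    Fintype.card_fin, nsmul_eq_mul, ← Finset.mul_sum]
  linear_combination (4 * k * (k + 1) * invNormSq x ^ (k + 1)) * sum_sq_mul_invNormSq hx

lemma lap_coord_mul_invNormSq_pow (hx : x ≠ 0) (a : Fin m) (k : ℕ) :
    lap (fun y => y a * invNormSq y ^ k) x
      = 2 * k * (2 * k - m) * x a * invNormSq x ^ (k + 1) := by
  have hpd : ∀ i, pd (pd (fun y => y a * invNormSq y ^ k) i) i x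
      = (if a = i then 1 else 0) * (-4 * k * x i * invNormSq x ^ (k + 1))
        - 2 * k * x a * invNormSq x ^ (k + 1)
        + 4 * k * (k + 1) * x a * invNormSq x ^ (k + 2) * x i ^ 2 := by
    intro i
    have hq := (differentiableAt_invNormSq hx).fun_pow k
    have hi := differentiableAt_coord_mul_invNormSq_pow hx i (k + 1)
    have hai := (differentiableAt_coord a).fun_mul hi
    rw [pd_congr ((eventually_ne_nhds hx).mono fun y hy => pd_coord_mul_invNormSq_pow hy a k i),
      pd_sub (hq.const_mul _) (hai.const_mul _), pd_const_mul hq, pd_invNormSq_pow hx,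
      pd_const_mul hai, pd_mul (differentiableAt_coord a) hi, pd_coord,
      pd_coord_mul_invNormSq_pow hx]
    simp only [if_true]
    push_cast
    ring
  simp only [lap, hpd, Finset.sum_add_distrib, Finset.sum_sub_distrib, Finset.sum_const,
    Finset.card_univ, Fintype.card_fin, nsmul_eq_mul, ← Finset.mul_sum, Finset.sum_boole_mul,
    Finset.mem_univ, if_true]
  linear_combination (4 * k * (k + 1) * x a * invNormSq x ^ (k + 1)) * sum_sq_mul_invNormSq hx

lemma sum_pd_mul_pd_coord_mul_invNormSq_pow (hx : x ≠ 0) (a b : Fin m) (k l : ℕ) :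
    ∑ i, pd (fun y => y a * invNormSq y ^ k) i x * pd (fun y => y b * invNormSq y ^ l) i x
      = (if a = b then 1 else 0) * invNormSq x ^ (k + l)
        + (4 * k * l - 2 * k - 2 * l) * x a * x b * invNormSq x ^ (k + l + 1) := by
  have hterm : ∀ i,
      pd (fun y => y a * invNormSq y ^ k) i x * pd (fun y => y b * invNormSq y ^ l) i x
      = (if a = i then 1 else 0) * ((if b = i then 1 else 0) * invNormSq x ^ (k + l))
        - (if a = i then 1 else 0) * (2 * l * x b * x i * invNormSq x ^ (k + l + 1))
        - (if b = i then 1 else 0) * (2 * k * x a * x i * invNormSq x ^ (k + l + 1))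
        + 4 * k * l * x a * x b * invNormSq x ^ (k + l + 2) * x i ^ 2 := by
    intro i
    rw [pd_coord_mul_invNormSq_pow hx, pd_coord_mul_invNormSq_pow hx]
    ring
  simp only [hterm, Finset.sum_add_distrib, Finset.sum_sub_distrib, ← Finset.mul_sum,
    Finset.sum_boole_mul, Finset.mem_univ, if_true, @eq_comm _ b a]
  linear_combination (4 * k * l * x a * x b * invNormSq x ^ (k + l + 1)) * sum_sq_mul_invNormSq hx

def inversion (y : E m) : E m := invNormSq y • y

lemma inversion_apply (y : E m) (a : Fin m) : inversion y a = y a * invNormSq y ^ 1 := by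
  simp [inversion, mul_comm]

lemma lap_inversion_apply (hx : x ≠ 0) (a : Fin m) :
    lap (fun y => inversion y a) x = (4 - 2 * m) * (x a * invNormSq x ^ 2) := by
  simp only [inversion_apply]
  rw [lap_coord_mul_invNormSq_pow hx]
  push_cast
  ring

lemma differentiableAt_pd_inversion (hx : x ≠ 0) (a i : Fin m) :
    DifferentiableAt ℝ (pd (fun y => inversion y a) i) x := by
  simp only [inversion_apply]
  refine (EventuallyEq.differentiableAt_iff ((eventually_ne_nhds hx).mono fun y hy =>
    pd_coord_mul_invNormSq_pow hy a 1 i)).mpr ?_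
  have hai := (differentiableAt_coord a).fun_mul (differentiableAt_coord_mul_invNormSq_pow hx i 2)
  exact (((differentiableAt_invNormSq hx).fun_pow 1).const_mul _).sub (hai.const_mul _)

lemma div'_lap_inversion_smul_gradient (hx : x ≠ 0) (a b : Fin m) :
    div' (fun y => lap (fun z => inversion z b) y • gradient (fun z => inversion z a) y) x
      = (4 - 2 * m) * ((if a = b then 1 else 0) * invNormSq x ^ 3
        + (6 - 2 * m) * x a * x b * invNormSq x ^ 4) := by
  have hb := differentiableAt_coord_mul_invNormSq_pow hx b 2
  rw [div'_congr ((eventually_ne_nhds hx).mono fun y hy => by rw [lap_inversion_apply hy b]),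
    div'_smul_gradient (hb.const_mul _) (differentiableAt_pd_inversion hx a)]
  simp only [pd_const_mul hb, mul_assoc, ← Finset.mul_sum]
  rw [lap_inversion_apply hx]
  simp only [inversion_apply]
  rw [sum_pd_mul_pd_coord_mul_invNormSq_pow hx]
  simp only [@eq_comm _ b a]
  push_cast
  ring

end InverseNormSquare

/-- The inversion `φ(x) = x/|x|²` on `ℝ⁴∖{0}`, with `λ²(x) = 1/|x|⁴`, satisfies the fourth
defining condition for a biharmonic morphism between flat spaces:
`δ^{αβ}Δ(λ²) + div(Δφ^β∇φ^α) + div(Δφ^α∇φ^β) = Δφ^α·Δφ^β`. -/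
theorem inversion_fourth_condition (α β : Fin 4) (x : E 4) (hx : x ≠ 0) :
    (if α = β then (1:ℝ) else 0) * lap (fun y : E 4 => (‖y‖ ^ 4)⁻¹) x
      + div' (fun y : E 4 =>
          lap (fun z : E 4 => ((‖z‖ ^ 2)⁻¹ • z) β) y
            • gradient (fun z : E 4 => ((‖z‖ ^ 2)⁻¹ • z) α) y) x
      + div' (fun y : E 4 =>
          lap (fun z : E 4 => ((‖z‖ ^ 2)⁻¹ • z) α) y
            • gradient (fun z : E 4 => ((‖z‖ ^ 2)⁻¹ • z) β) y) x
      = lap (fun y : E 4 => ((‖y‖ ^ 2)⁻¹ • y) α) x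
          * lap (fun y : E 4 => ((‖y‖ ^ 2)⁻¹ • y) β) x := by
  have hdilation : (fun y : E 4 => (‖y‖ ^ 4)⁻¹) = fun y => invNormSq y ^ 2 := by
    ext y
    rw [invNormSq, inv_pow, ← pow_mul]
  simp only [hdilation, show ∀ z : E 4, (‖z‖ ^ 2)⁻¹ • z = inversion z from fun _ => rfl]
  rw [lap_invNormSq_pow hx, div'_lap_inversion_smul_gradient hx,
    div'_lap_inversion_smul_gradient hx, lap_inversion_apply hx, lap_inversion_apply hx]
  rcases eq_or_ne α β with rfl | h
  · simp only [if_true]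
    push_cast
    ring
  · simp only [if_neg h, if_neg h.symm]
    push_cast
    ring
end
end

section
/- Let n ≥ 2, ε ∈ {−1, 1}, U = {x ∈ ℝⁿ : 1 + ε|x|² > 0}, and ρ : U → ℝ, ρ(x) = ln 2 − ln(1 + ε|x|²). Define the vector field E(x) = Δ(∇ρ)(x) − Δρ(x)·∇ρ(x) + 2∇(|∇ρ|²)(x) + (2−n)|∇ρ(x)|²·∇ρ(x) + ε(n−1)e^{2ρ(x)}·∇ρ(x). Then E(x) = −8(n−4)(1 − ε|x|²)·x/(1 + ε|x|²)³ for all x ∈ U; consequently E ≡ 0 on U if and only if n = 4. -/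
noncomputable section

/-!
`ρ(x) = φ(‖x‖²)` with `φ(s) = ln 2 − ln(1 + εs)` is radial, so every term of `E` is read off
from one-variable derivatives via `Δ(φ(‖x‖²)) = 4‖x‖²φ'' + 2nφ'` and, by the product rule
`Δ(u·xᵢ) = Δu·xᵢ + 2∂ᵢu`, `Δ(ψ(‖x‖²)xᵢ) = (4‖x‖²ψ'' + (2n+4)ψ')xᵢ`. This gives
`E = −8(n−4)ε²(1−ε‖x‖²)x/(1+ε‖x‖²)³` for every `ε`; for `ε = ±1` the factor `1 − ε‖x‖²` does
not vanish identically, so `E ≡ 0` forces `n = 4`.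
-/

open Filter Topology

section PartialDerivatives

variable {n : ℕ} {u v : E n → ℝ} {x : E n}

theorem HasFDerivAt.pd_eq {u' : E n →L[ℝ] ℝ} (h : HasFDerivAt u u' x) (i : Fin n) :
    pd u i x = u' (EuclideanSpace.single i 1) := by
  rw [pd, h.fderiv]

theorem Filter.EventuallyEq.pd_eq (h : u =ᶠ[𝓝 x] v) (i : Fin n) : pd u i x = pd v i x := by
  rw [pd, pd, h.fderiv_eq]

theorem Filter.EventuallyEq.pd (h : u =ᶠ[𝓝 x] v) (i : Fin n) : pd u i =ᶠ[𝓝 x] pd v i :=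
  h.eventuallyEq_nhds.mono fun _ hy => hy.pd_eq i

theorem Filter.EventuallyEq.lap_eq (h : u =ᶠ[𝓝 x] v) : lap u x = lap v x :=
  Finset.sum_congr rfl fun i _ => (h.pd i).pd_eq i

theorem hasFDerivAt_coord (i : Fin n) (x : E n) :
    HasFDerivAt (fun y : E n => y i) (EuclideanSpace.proj (𝕜 := ℝ) i) x :=
  (EuclideanSpace.proj (𝕜 := ℝ) i).hasFDerivAt

theorem pd_mul_coord (hu : DifferentiableAt ℝ u x) (i j : Fin n) :
    pd (fun y => u y * y i) j x = pd u j x * x i + if i = j then u x else 0 := by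
  rw [(hu.hasFDerivAt.fun_mul (hasFDerivAt_coord i x)).pd_eq, pd]
  simp only [add_apply, smul_apply, PiLp.proj_apply, PiLp.single_apply, smul_eq_mul, mul_ite,
    mul_one, mul_zero]
  ring

theorem lap_mul_coord (hu : ∀ᶠ y in 𝓝 x, DifferentiableAt ℝ u y)
    (hpd : ∀ j, DifferentiableAt ℝ (pd u j) x) (i : Fin n) :
    lap (fun y => u y * y i) x = lap u x * x i + 2 * pd u i x := by
  have hpd_pd (j : Fin n) : pd (pd (fun y => u y * y i) j) j x
      = pd (pd u j) j x * x i + 2 * if i = j then pd u j x else 0 := by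
    have hfirst : pd (fun y => u y * y i) j =ᶠ[𝓝 x]
        fun y => pd u j y * y i + (if i = j then 1 else 0) * u y :=
      hu.mono fun y hy => by rw [pd_mul_coord hy]; split_ifs <;> ring
    rw [hfirst.pd_eq, (((hpd j).hasFDerivAt.fun_mul (hasFDerivAt_coord i x)).fun_add
      (hu.self_of_nhds.hasFDerivAt.const_mul _)).pd_eq]
    split_ifs with hij <;>
      simp only [pd, hij, add_apply, smul_apply, PiLp.proj_apply, PiLp.single_eq_same, ne_eq,
        not_false_eq_true, PiLp.single_eq_of_ne, smul_eq_mul, one_smul, zero_smul, mul_one, mul_zero,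
        add_zero, zero_add] <;>
      ring
  simp only [lap, hpd_pd, Finset.sum_add_distrib, ← Finset.sum_mul, ← Finset.mul_sum,
    Finset.sum_ite_eq, Finset.mem_univ, if_true]

end PartialDerivatives

section Radial

variable {n : ℕ} {φ : ℝ → ℝ} {x : E n}

theorem HasDerivAt.hasFDerivAt_comp_norm_sq {φ' : ℝ} (hφ : HasDerivAt φ φ' (‖x‖ ^ 2)) :
    HasFDerivAt (fun y : E n => φ (‖y‖ ^ 2)) ((2 * φ') • innerSL ℝ x) x := by
  refine (hφ.comp_hasFDerivAt x (hasStrictFDerivAt_norm_sq x).hasFDerivAt).congr_fderiv ?_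
  ext v
  simp only [smul_apply, coe_innerSL_apply, nsmul_eq_mul, Nat.cast_ofNat, smul_eq_mul]
  ring

theorem HasDerivAt.hasGradientAt_comp_norm_sq {φ' : ℝ} (hφ : HasDerivAt φ φ' (‖x‖ ^ 2)) :
    HasGradientAt (fun y : E n => φ (‖y‖ ^ 2)) ((2 * φ') • x) x := by
  rw [hasGradientAt_iff_hasFDerivAt]
  refine hφ.hasFDerivAt_comp_norm_sq.congr_fderiv ?_
  ext v
  simp

theorem HasDerivAt.pd_comp_norm_sq {φ' : ℝ} (hφ : HasDerivAt φ φ' (‖x‖ ^ 2)) (i : Fin n) :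
    pd (fun y : E n => φ (‖y‖ ^ 2)) i x = 2 * φ' * x i := by
  rw [hφ.hasFDerivAt_comp_norm_sq.pd_eq]
  simp [EuclideanSpace.inner_single_right]

variable {φ' : ℝ → ℝ} {φ'' : ℝ}

theorem eventually_hasDerivAt_comp_norm_sq (hφ : ∀ᶠ s in 𝓝 (‖x‖ ^ 2), HasDerivAt φ (φ' s) s) :
    ∀ᶠ y in 𝓝 x, HasDerivAt φ (φ' (‖y‖ ^ 2)) (‖y‖ ^ 2) :=
  (continuous_norm.pow 2).continuousAt.eventually hφ

theorem pd_comp_norm_sq_eventuallyEq (hφ : ∀ᶠ s in 𝓝 (‖x‖ ^ 2), HasDerivAt φ (φ' s) s)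
    (j : Fin n) :
    pd (fun y : E n => φ (‖y‖ ^ 2)) j =ᶠ[𝓝 x] fun y => 2 * φ' (‖y‖ ^ 2) * y j :=
  (eventually_hasDerivAt_comp_norm_sq hφ).mono fun _ hy => hy.pd_comp_norm_sq j

theorem lap_comp_norm_sq (hφ : ∀ᶠ s in 𝓝 (‖x‖ ^ 2), HasDerivAt φ (φ' s) s)
    (hφ' : HasDerivAt φ' φ'' (‖x‖ ^ 2)) :
    lap (fun y : E n => φ (‖y‖ ^ 2)) x = 4 * ‖x‖ ^ 2 * φ'' + 2 * n * φ' (‖x‖ ^ 2) := by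
  have h2φ' := hφ'.const_mul 2
  have hpd_pd (j : Fin n) : pd (pd (fun y : E n => φ (‖y‖ ^ 2)) j) j x
      = 4 * φ'' * x j ^ 2 + 2 * φ' (‖x‖ ^ 2) := by
    rw [(pd_comp_norm_sq_eventuallyEq hφ j).pd_eq,
      pd_mul_coord h2φ'.hasFDerivAt_comp_norm_sq.differentiableAt, h2φ'.pd_comp_norm_sq, if_pos rfl]
    ring
  simp only [lap, hpd_pd, Finset.sum_add_distrib, ← Finset.mul_sum, Finset.sum_const,
    Finset.card_univ, Fintype.card_fin, nsmul_eq_mul, ← EuclideanSpace.real_norm_sq_eq]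
  ring

theorem lap_comp_norm_sq_mul_coord (hφ : ∀ᶠ s in 𝓝 (‖x‖ ^ 2), HasDerivAt φ (φ' s) s)
    (hφ' : HasDerivAt φ' φ'' (‖x‖ ^ 2)) (i : Fin n) :
    lap (fun y : E n => φ (‖y‖ ^ 2) * y i) x
      = (4 * ‖x‖ ^ 2 * φ'' + (2 * n + 4) * φ' (‖x‖ ^ 2)) * x i := by
  have hdiff : ∀ᶠ y in 𝓝 x, DifferentiableAt ℝ (fun y : E n => φ (‖y‖ ^ 2)) y :=
    (eventually_hasDerivAt_comp_norm_sq hφ).mono fun _ hy =>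
      hy.hasFDerivAt_comp_norm_sq.differentiableAt
  have hpd_diff (j : Fin n) : DifferentiableAt ℝ (pd (fun y : E n => φ (‖y‖ ^ 2)) j) x :=
    (((hφ'.const_mul 2).hasFDerivAt_comp_norm_sq.fun_mul (hasFDerivAt_coord j x)).differentiableAt
      ).congr_of_eventuallyEq (pd_comp_norm_sq_eventuallyEq hφ j)
  rw [lap_mul_coord hdiff hpd_diff, lap_comp_norm_sq hφ hφ',
    (eventually_hasDerivAt_comp_norm_sq hφ).self_of_nhds.pd_comp_norm_sq]
  ring

end Radial

section OneAddMul

variable {ε s : ℝ}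

theorem eventually_one_add_mul_ne_zero (hs : 1 + ε * s ≠ 0) : ∀ᶠ t in 𝓝 s, 1 + ε * t ≠ 0 :=
  (continuous_const.add (continuous_const.mul continuous_id)).continuousAt.eventually_ne hs

theorem hasDerivAt_log_two_sub_log_one_add_mul (hs : 1 + ε * s ≠ 0) :
    HasDerivAt (fun t => Real.log 2 - Real.log (1 + ε * t)) (-ε / (1 + ε * s)) s := by
  have h := ((((hasDerivAt_id s).const_mul ε).const_add 1).log hs).const_sub (Real.log 2)
  simpa [neg_div] using h

theorem hasDerivAt_div_one_add_mul (c : ℝ) (hs : 1 + ε * s ≠ 0) :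
    HasDerivAt (fun t => c / (1 + ε * t)) (-(c * ε) / (1 + ε * s) ^ 2) s := by
  have h := (hasDerivAt_const s c).fun_div (((hasDerivAt_id s).const_mul ε).const_add 1) hs
  simpa using h

theorem hasDerivAt_div_one_add_mul_sq (c : ℝ) (hs : 1 + ε * s ≠ 0) :
    HasDerivAt (fun t => c / (1 + ε * t) ^ 2) (-(2 * c * ε) / (1 + ε * s) ^ 3) s := by
  refine ((hasDerivAt_const s c).fun_div ((((hasDerivAt_id s).const_mul ε).const_add 1).fun_pow 2)
    (pow_ne_zero 2 hs)).congr_deriv ?_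
  simp only [id, mul_one, zero_mul, zero_sub]
  field_simp
  ring

end OneAddMul

def conformalFactor (ε : ℝ) {n : ℕ} : E n → ℝ := fun z => Real.log 2 - Real.log (1 + ε * ‖z‖ ^ 2)

section ConformalFactor

variable {n : ℕ} {ε : ℝ} {x : E n}

theorem gradient_conformalFactor (hx : 1 + ε * ‖x‖ ^ 2 ≠ 0) :
    gradient (conformalFactor ε) x = (-(2 * ε) / (1 + ε * ‖x‖ ^ 2)) • x := by
  unfold conformalFactor
  rw [(hasDerivAt_log_two_sub_log_one_add_mul hx).hasGradientAt_comp_norm_sq.gradient]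
  congr 1
  ring

theorem lap_conformalFactor (hx : 1 + ε * ‖x‖ ^ 2 ≠ 0) :
    lap (conformalFactor ε) x
      = 4 * ε ^ 2 * ‖x‖ ^ 2 / (1 + ε * ‖x‖ ^ 2) ^ 2 - 2 * n * ε / (1 + ε * ‖x‖ ^ 2) := by
  have hφ := (eventually_one_add_mul_ne_zero hx).mono fun _ hs =>
    hasDerivAt_log_two_sub_log_one_add_mul (ε := ε) hs
  unfold conformalFactor
  rw [lap_comp_norm_sq hφ (hasDerivAt_div_one_add_mul (-ε) hx)]
  ring

theorem gradient_conformalFactor_eventuallyEq (hx : 1 + ε * ‖x‖ ^ 2 ≠ 0) :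
    gradient (conformalFactor ε) =ᶠ[𝓝 x] fun y => (-(2 * ε) / (1 + ε * ‖y‖ ^ 2)) • y :=
  ((continuous_norm.pow 2).continuousAt.eventually (eventually_one_add_mul_ne_zero hx)).mono
    fun _ hy => gradient_conformalFactor hy

theorem lap_gradient_conformalFactor_apply (hx : 1 + ε * ‖x‖ ^ 2 ≠ 0) (i : Fin n) :
    lap (fun y => gradient (conformalFactor ε) y i) x
      = (4 * (n + 2) * ε ^ 2 / (1 + ε * ‖x‖ ^ 2) ^ 2
          - 16 * ε ^ 3 * ‖x‖ ^ 2 / (1 + ε * ‖x‖ ^ 2) ^ 3) * x i := by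
  have hcoord : (fun y => gradient (conformalFactor ε) y i) =ᶠ[𝓝 x]
      fun y => -(2 * ε) / (1 + ε * ‖y‖ ^ 2) * y i :=
    (gradient_conformalFactor_eventuallyEq hx).mono fun _ hy => by simp only at hy ⊢; simp [hy]
  have hφ := (eventually_one_add_mul_ne_zero hx).mono fun _ hs =>
    hasDerivAt_div_one_add_mul (-(2 * ε)) hs
  rw [hcoord.lap_eq, lap_comp_norm_sq_mul_coord hφ (hasDerivAt_div_one_add_mul_sq _ hx)]
  field_simp
  ring

theorem gradient_norm_sq_gradient_conformalFactor (hx : 1 + ε * ‖x‖ ^ 2 ≠ 0) :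
    gradient (fun y => ‖gradient (conformalFactor ε) y‖ ^ 2) x
      = (8 * ε ^ 2 * (1 - ε * ‖x‖ ^ 2) / (1 + ε * ‖x‖ ^ 2) ^ 3) • x := by
  have hnorm : (fun y => ‖gradient (conformalFactor ε) y‖ ^ 2) =ᶠ[𝓝 x]
      fun y => ‖y‖ ^ 2 * (-(2 * ε) / (1 + ε * ‖y‖ ^ 2)) ^ 2 :=
    (gradient_conformalFactor_eventuallyEq hx).mono fun y hy => by
      simp only at hy ⊢
      rw [hy, norm_smul, mul_pow, Real.norm_eq_abs, sq_abs, mul_comm]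
  have hψ := (hasDerivAt_id' (‖x‖ ^ 2)).fun_mul ((hasDerivAt_div_one_add_mul (-(2 * ε)) hx).fun_pow 2)
  rw [hnorm.gradient_eq, hψ.hasGradientAt_comp_norm_sq.gradient]
  congr 1
  norm_num
  field_simp
  ring

theorem exp_two_mul_conformalFactor (hx : 1 + ε * ‖x‖ ^ 2 ≠ 0) :
    Real.exp (2 * conformalFactor ε x) = 4 / (1 + ε * ‖x‖ ^ 2) ^ 2 := by
  have hlog : 2 * conformalFactor ε x = Real.log (2 ^ 2) - Real.log ((1 + ε * ‖x‖ ^ 2) ^ 2) := by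
    rw [Real.log_pow, Real.log_pow, conformalFactor]
    push_cast
    ring
  rw [hlog, Real.exp_sub, Real.exp_log (by positivity), Real.exp_log (by positivity)]
  norm_num

end ConformalFactor

def biharmonicField (ε : ℝ) {n : ℕ} (ρ : E n → ℝ) (x : E n) (i : Fin n) : ℝ :=
  lap (fun y => gradient ρ y i) x - lap ρ x * gradient ρ x i
    + 2 * gradient (fun y => ‖gradient ρ y‖ ^ 2) x i
    + (2 - (n : ℝ)) * ‖gradient ρ x‖ ^ 2 * gradient ρ x i
    + ε * ((n : ℝ) - 1) * Real.exp (2 * ρ x) * gradient ρ x i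

theorem biharmonicField_conformalFactor {n : ℕ} {ε : ℝ} {x : E n}
    (hx : 1 + ε * ‖x‖ ^ 2 ≠ 0) (i : Fin n) :
    biharmonicField ε (conformalFactor ε) x i
      = -8 * ((n : ℝ) - 4) * ε ^ 2 * (1 - ε * ‖x‖ ^ 2) * x i / (1 + ε * ‖x‖ ^ 2) ^ 3 := by
  have hgrad : gradient (conformalFactor ε) x i = -(2 * ε) / (1 + ε * ‖x‖ ^ 2) * x i := by
    rw [gradient_conformalFactor hx]; rfl
  have hnorm : ‖gradient (conformalFactor ε) x‖ ^ 2
      = 4 * ε ^ 2 * ‖x‖ ^ 2 / (1 + ε * ‖x‖ ^ 2) ^ 2 := by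
    rw [gradient_conformalFactor hx, norm_smul, mul_pow, Real.norm_eq_abs, sq_abs]
    field_simp
    ring
  have hgrad_norm : gradient (fun y => ‖gradient (conformalFactor ε) y‖ ^ 2) x i
      = 8 * ε ^ 2 * (1 - ε * ‖x‖ ^ 2) / (1 + ε * ‖x‖ ^ 2) ^ 3 * x i := by
    rw [gradient_norm_sq_gradient_conformalFactor hx]; rfl
  rw [biharmonicField, lap_gradient_conformalFactor_apply hx, lap_conformalFactor hx, hgrad,
    hnorm, hgrad_norm, exp_two_mul_conformalFactor hx]
  field_simp
  ring

/-- The biharmonicity equation for the identity map from the flat metric to the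
constant-curvature-ε metric `e^{2ρ}ds²`, `ρ = ln2 − ln(1+ε|x|²)`: the vector field
`E = Δ(∇ρ) − Δρ·∇ρ + 2∇(|∇ρ|²) + (2−n)|∇ρ|²∇ρ + ε(n−1)e^{2ρ}∇ρ` equals
`−8(n−4)(1−ε|x|²)x/(1+ε|x|²)³`, hence vanishes identically iff `n = 4`. -/
theorem stereographic_biharmonic_iff_dim_four (n : ℕ) (hn : 2 ≤ n)
    (ε : ℝ) (hε : ε = -1 ∨ ε = 1) :
    (∀ x : E n, 0 < 1 + ε * ‖x‖ ^ 2 → ∀ i : Fin n,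
      (lap (fun y =>
          gradient (fun z : E n => Real.log 2 - Real.log (1 + ε * ‖z‖ ^ 2)) y i) x
        - lap (fun z : E n => Real.log 2 - Real.log (1 + ε * ‖z‖ ^ 2)) x
            * gradient (fun z : E n => Real.log 2 - Real.log (1 + ε * ‖z‖ ^ 2)) x i
        + 2 * gradient (fun y =>
            ‖gradient (fun z : E n => Real.log 2 - Real.log (1 + ε * ‖z‖ ^ 2)) y‖ ^ 2) x i
        + (2 - (n : ℝ))
            * ‖gradient (fun z : E n => Real.log 2 - Real.log (1 + ε * ‖z‖ ^ 2)) x‖ ^ 2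
            * gradient (fun z : E n => Real.log 2 - Real.log (1 + ε * ‖z‖ ^ 2)) x i
        + ε * ((n : ℝ) - 1)
            * Real.exp (2 * (Real.log 2 - Real.log (1 + ε * ‖x‖ ^ 2)))
            * gradient (fun z : E n => Real.log 2 - Real.log (1 + ε * ‖z‖ ^ 2)) x i)
        = -8 * ((n : ℝ) - 4) * (1 - ε * ‖x‖ ^ 2) * x i / (1 + ε * ‖x‖ ^ 2) ^ 3) ∧
    ((∀ x : E n, 0 < 1 + ε * ‖x‖ ^ 2 → ∀ i : Fin n,
      (lap (fun y =>
          gradient (fun z : E n => Real.log 2 - Real.log (1 + ε * ‖z‖ ^ 2)) y i) x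
        - lap (fun z : E n => Real.log 2 - Real.log (1 + ε * ‖z‖ ^ 2)) x
            * gradient (fun z : E n => Real.log 2 - Real.log (1 + ε * ‖z‖ ^ 2)) x i
        + 2 * gradient (fun y =>
            ‖gradient (fun z : E n => Real.log 2 - Real.log (1 + ε * ‖z‖ ^ 2)) y‖ ^ 2) x i
        + (2 - (n : ℝ))
            * ‖gradient (fun z : E n => Real.log 2 - Real.log (1 + ε * ‖z‖ ^ 2)) x‖ ^ 2
            * gradient (fun z : E n => Real.log 2 - Real.log (1 + ε * ‖z‖ ^ 2)) x i
        + ε * ((n : ℝ) - 1)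
            * Real.exp (2 * (Real.log 2 - Real.log (1 + ε * ‖x‖ ^ 2)))
            * gradient (fun z : E n => Real.log 2 - Real.log (1 + ε * ‖z‖ ^ 2)) x i)
        = 0) ↔ n = 4) := by
  have hε_sq : ε ^ 2 = 1 := by rcases hε with rfl | rfl <;> norm_num
  have hE (x : E n) (hx : 0 < 1 + ε * ‖x‖ ^ 2) (i : Fin n) :
      biharmonicField ε (conformalFactor ε) x i
        = -8 * ((n : ℝ) - 4) * (1 - ε * ‖x‖ ^ 2) * x i / (1 + ε * ‖x‖ ^ 2) ^ 3 := by
    rw [biharmonicField_conformalFactor hx.ne', hε_sq, mul_one]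
  refine ⟨hE, fun hzero => ?_, ?_⟩
  · -- at `x₀ = e₀/2` the factor `(1 - ε‖x₀‖²) x₀ i₀ = (1 - ε/4)/2` is nonzero
    let i₀ : Fin n := ⟨0, by omega⟩
    let x₀ : E n := EuclideanSpace.single i₀ (1 / 2)
    have hx₀ : ‖x₀‖ ^ 2 = 1 / 4 := by
      rw [PiLp.norm_single]; norm_num
    have hpos : 0 < 1 + ε * ‖x₀‖ ^ 2 := by rw [hx₀]; rcases hε with rfl | rfl <;> norm_num
    have h := (hE x₀ hpos i₀).symm.trans (hzero x₀ hpos i₀)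
    rw [hx₀, show x₀ i₀ = 1 / 2 by simp [x₀]] at h
    have : ((n : ℝ) - 4) = 0 := by rcases hε with rfl | rfl <;> norm_num at h <;> linarith
    exact_mod_cast sub_eq_zero.mp this
  · rintro rfl x hx i
    exact (hE x hx i).trans (by norm_num)

end
end
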